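/- arXiv:1911.01026 — 3 statements merged into one kernel-verified Lean document; each statement's English description precedes it below -/
import Mathlib

section
/- The function s ↦ arccosh(s)² on [1,∞) is differentiable at s = 1 from the right, with one-sided derivative equal to 2; equivalently, lim_{s→1+} (arccosh(s)² − arccosh(1)²)/(s − 1) = lim_{s→1+} arccosh(s)²/(s − 1) = 2. -/
open Real Filter

/-- arccosh(s) = log(s + √(s²−1)). -/
noncomputable def arccosh (s : ℝ) : ℝ := Real.log (s + Real.sqrt (s ^ 2 - 1))

private lemma g_gt_one {s : ℝ} (hs : 1 < s) : 1 < s + Real.sqrt (s ^ 2 - 1) :=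
  lt_of_lt_of_le hs (le_add_of_nonneg_right (Real.sqrt_nonneg _))

private lemma hlog : Tendsto (fun x : ℝ => Real.log x / (x - 1)) (nhdsWithin 1 {(1:ℝ)}ᶜ) (nhds 1) := by
  have h := Real.hasDerivAt_log one_ne_zero
  rw [hasDerivAt_iff_tendsto_slope] at h
  rw [inv_one] at h
  refine h.congr fun x => ?_
  rw [slope_def_field]
  simp

private lemma hgt : Tendsto (fun s : ℝ => s + Real.sqrt (s ^ 2 - 1)) (nhdsWithin 1 (Set.Ioi 1)) (nhdsWithin 1 (Set.Ioi 1)) := by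
  apply tendsto_nhdsWithin_of_tendsto_nhds_of_eventually_within
  · have hc : Continuous (fun s : ℝ => s + Real.sqrt (s ^ 2 - 1)) :=
      continuous_id.add (Real.continuous_sqrt.comp (by continuity))
    have := (hc.tendsto 1).mono_left (nhdsWithin_le_nhds (s := Set.Ioi (1:ℝ)))
    simpa using this
  · filter_upwards [self_mem_nhdsWithin] with s hs using g_gt_one hs

private lemma hA : Tendsto (fun s : ℝ => Real.log (s + Real.sqrt (s ^ 2 - 1)) / (s + Real.sqrt (s ^ 2 - 1) - 1)) (nhdsWithin 1 (Set.Ioi 1)) (nhds 1) := by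
  have hle : nhdsWithin (1:ℝ) (Set.Ioi 1) ≤ nhdsWithin 1 {(1:ℝ)}ᶜ :=
    nhdsWithin_mono _ (fun x hx => ne_of_gt hx)
  exact hlog.comp (hgt.mono_right hle)

private lemma hB : Tendsto (fun s : ℝ => (s + Real.sqrt (s ^ 2 - 1) - 1) ^ 2 / (s - 1)) (nhdsWithin 1 (Set.Ioi 1)) (nhds 2) := by
  have hc : Continuous (fun s : ℝ => (s - 1) + 2 * Real.sqrt (s ^ 2 - 1) + (s + 1)) := by
    apply Continuous.add
    apply Continuous.add (by continuity)
    exact continuous_const.mul (Real.continuous_sqrt.comp (by continuity))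
    continuity
  have hcont : Tendsto (fun s : ℝ => (s - 1) + 2 * Real.sqrt (s ^ 2 - 1) + (s + 1)) (nhdsWithin 1 (Set.Ioi 1)) (nhds 2) := by
    have := (hc.tendsto 1).mono_left (nhdsWithin_le_nhds (s := Set.Ioi (1:ℝ)))
    norm_num at this
    simpa using this
  refine hcont.congr' ?_
  filter_upwards [self_mem_nhdsWithin] with s hs
  have hs1 : (1:ℝ) < s := hs
  have ha2 : Real.sqrt (s ^ 2 - 1) ^ 2 = s ^ 2 - 1 :=
    Real.sq_sqrt (by nlinarith)
  rw [eq_div_iff (sub_ne_zero.mpr (ne_of_gt hs1))]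
  nlinarith [ha2]

private lemma key : Tendsto (fun s : ℝ => arccosh s ^ 2 / (s - 1)) (nhdsWithin 1 (Set.Ioi 1)) (nhds 2) := by
  have hmul := (hA.pow 2).mul hB
  norm_num at hmul
  refine hmul.congr' ?_
  filter_upwards [self_mem_nhdsWithin] with s hs
  have hd : s + Real.sqrt (s ^ 2 - 1) - 1 ≠ 0 := sub_ne_zero.mpr (ne_of_gt (g_gt_one hs))
  have hs1 : s - 1 ≠ 0 := sub_ne_zero.mpr (ne_of_gt hs)
  unfold arccosh
  field_simp

theorem arccosh_sq_one_sided_deriv :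
    HasDerivWithinAt (fun s : ℝ => arccosh s ^ 2) 2 (Set.Ici 1) 1 ∧
      Tendsto (fun s : ℝ => arccosh s ^ 2 / (s - 1)) (nhdsWithin 1 (Set.Ioi 1))
        (nhds 2) := by
  refine ⟨?_, key⟩
  rw [hasDerivWithinAt_iff_tendsto_slope]
  have hset : Set.Ici (1:ℝ) \ {1} = Set.Ioi 1 := Set.Ici_sdiff_left
  rw [hset]
  refine key.congr fun s => ?_
  rw [slope_def_field]
  have h1 : arccosh 1 = 0 := by unfold arccosh; norm_num
  rw [h1]
  ring_nf
end

section
/- arccosh((2+√2)/√(5+4√2)) ≠ (1/3)·arccosh(√2). (Numerically 0.3017 ≠ 0.2938.) -/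
open Real

theorem means_differ :
    arccosh ((2 + Real.sqrt 2) / Real.sqrt (5 + 4 * Real.sqrt 2)) ≠
      (1 / 3) * arccosh (Real.sqrt 2) := by
  intro h
  set s := Real.sqrt 2 with hsdef
  have hs2 : s ^ 2 = 2 := Real.sq_sqrt (by norm_num)
  have hs0 : 0 < s := Real.sqrt_pos.mpr (by norm_num)
  have ht0 : (0:ℝ) < 5 + 4 * s := by nlinarith
  set t := Real.sqrt (5 + 4 * s) with htdef
  have ht2 : t ^ 2 = 5 + 4 * s := Real.sq_sqrt ht0.le
  have htpos : 0 < t := Real.sqrt_pos.mpr ht0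
  have hx2 : ((2 + s) / t) ^ 2 - 1 = (1 / t) ^ 2 := by
    field_simp
    nlinarith [ht2, hs2]
  have hsx : Real.sqrt (((2 + s) / t) ^ 2 - 1) = 1 / t := by
    rw [hx2]
    exact Real.sqrt_sq (by positivity)
  have hA : arccosh ((2 + s) / t) = Real.log ((3 + s) / t) := by
    unfold arccosh
    rw [hsx]
    congr 1
    field_simp
    ring
  have hB : arccosh s = Real.log (1 + s) := by
    unfold arccosh
    rw [hs2]
    norm_num [Real.sqrt_one]
    ring_nf
  rw [hA, hB] at h
  have h3 : Real.log (((3 + s) / t) ^ 3) = Real.log (1 + s) := by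
    rw [Real.log_pow]
    push_cast
    linarith
  have hy : ((3 + s) / t) ^ 3 = 1 + s :=
    Real.log_injOn_pos (Set.mem_Ioi.mpr (by positivity))
      (Set.mem_Ioi.mpr (by positivity)) h3
  have heq : (3 + s) ^ 3 = (1 + s) * t ^ 3 := by
    have := hy
    field_simp at this
    linarith
  have h6 : (3 + s) ^ 6 = (1 + s) ^ 2 * (5 + 4 * s) ^ 3 := by
    have : ((3 + s) ^ 3) ^ 2 = ((1 + s) * t ^ 3) ^ 2 := by rw [heq]
    calc (3 + s) ^ 6 = ((3 + s) ^ 3) ^ 2 := by ring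
      _ = ((1 + s) * t ^ 3) ^ 2 := by rw [heq]
      _ = (1 + s) ^ 2 * (t ^ 2) ^ 3 := by ring
      _ = (1 + s) ^ 2 * (5 + 4 * s) ^ 3 := by rw [ht2]
  have key : (180:ℝ) + 116 * s = 0 := by
    linear_combination h6 - (s^4 - 46*s^3 - 231*s^2 - 396*s - 212) * hs2
  linarith
end

section
/- Let X = {a, a, b} (as a multiset) with a = (1,0,0), b = (√2,1,0) ∈ H², and let p̃ = ((2+√2),1,0)/√(5+4√2). Then p̃ does not minimize φ_X(p) = Σ_{x∈X} d_H(p,x)² over p ∈ H²; in particular there exists q ∈ H² with φ_X(q) < φ_X(p̃). -/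
open Real

/-- Minkowski bilinear form of signature (1, d) on ℝ^{d+1},
    with a point represented as a pair (x₀, (x₁, …, x_d)). -/
noncomputable def minkB {d : ℕ} (x y : ℝ × (Fin d → ℝ)) : ℝ :=
  x.1 * y.1 - ∑ j, x.2 j * y.2 j

/-- The hyperboloid model H^d = {x : B(x,x) = 1, x₀ > 0}. -/
def Hyp (d : ℕ) : Set (ℝ × (Fin d → ℝ)) := {x | minkB x x = 1 ∧ 0 < x.1}

/-- Hyperbolic distance d_H(x,y) = arccosh(B(x,y)). -/
noncomputable def dHyp {d : ℕ} (x y : ℝ × (Fin d → ℝ)) : ℝ :=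
  arccosh (minkB x y)

/-!
The points `a`, `b` and `p̃` all lie on the geodesic `t ↦ (cosh t, sinh t, 0)`, at parameters
`0`, `L = arsinh 1` and `s = arsinh (1 / √(5 + 4√2))`, and along it `d_H` is `|Δt|`. So on this
geodesic `φ_X` is `2t² + (t - L)²`, which is minimal only at `t = L / 3`; and `s ≠ L / 3`, since
`sinh (3s) = 1` would force `44 + 28√2 = 0`.
-/

lemma arccosh_eq_arcosh : arccosh = Real.arcosh := rfl

/-- The unit-speed geodesic through `(1, 0, 0)` in the `x₀x₁`-plane of `H²`. -/
noncomputable def hypLine (t : ℝ) : ℝ × (Fin 2 → ℝ) := (cosh t, ![sinh t, 0])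

lemma hypLine_mem_hyp (t : ℝ) : hypLine t ∈ Hyp 2 := by
  refine ⟨?_, cosh_pos t⟩
  simp only [minkB, hypLine, Fin.sum_univ_two, Matrix.cons_val_zero, Matrix.cons_val_one]
  linear_combination cosh_sq t

lemma minkB_hypLine (s t : ℝ) : minkB (hypLine s) (hypLine t) = cosh (s - t) := by
  simp only [minkB, hypLine, Fin.sum_univ_two, Matrix.cons_val_zero, Matrix.cons_val_one,
    cosh_sub]
  ring

lemma dHyp_hypLine (s t : ℝ) : dHyp (hypLine s) (hypLine t) = |s - t| := by
  rw [dHyp, minkB_hypLine, ← cosh_abs, arccosh_eq_arcosh, arcosh_cosh (abs_nonneg _)]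

lemma hypLine_arsinh {x₀ x₁ : ℝ} (h : x₀ ^ 2 - x₁ ^ 2 = 1) (hx₀ : 0 < x₀) :
    hypLine (arsinh x₁) = (x₀, ![x₁, 0]) := by
  rw [hypLine, sinh_arsinh, cosh_arsinh, show 1 + x₁ ^ 2 = x₀ ^ 2 by linarith,
    sqrt_sq hx₀.le]

lemma two_mul_sq_add_sq_sub_lt_of_ne_div_three {s L : ℝ} (hs : s ≠ L / 3) :
    2 * (L / 3) ^ 2 + (L / 3 - L) ^ 2 < 2 * s ^ 2 + (s - L) ^ 2 := by
  nlinarith [sq_pos_of_ne_zero (sub_ne_zero.mpr hs)]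

lemma arsinh_one_ne_three_mul_arsinh :
    arsinh 1 ≠ 3 * arsinh (√(5 + 4 * √2))⁻¹ := by
  intro h
  have h3 := congrArg sinh h
  rw [sinh_arsinh, sinh_three_mul, sinh_arsinh] at h3
  set u := (√(5 + 4 * √2))⁻¹
  have hu : u ^ 2 * (5 + 4 * √2) = 1 := by
    rw [inv_pow, sq_sqrt (by positivity), inv_mul_cancel₀ (by positivity)]
  have hlin : u * (19 + 12 * √2) = 5 + 4 * √2 := by
    linear_combination -(5 + 4 * √2) * h3 - 4 * u * hu
  have hsq2 : √2 ^ 2 = 2 := sq_sqrt zero_le_two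
  have : 44 + 28 * √2 = 0 := by
    linear_combination (5 + 4 * √2) * (u * (19 + 12 * √2) + (5 + 4 * √2)) * hlin
      - (19 + 12 * √2) ^ 2 * hu + (64 * √2 + 96) * hsq2
  exact absurd this (by positivity)

theorem projected_average_not_frechet_mean :
    ∃ q ∈ Hyp 2,
      2 * dHyp q ((1, ![0, 0]) : ℝ × (Fin 2 → ℝ)) ^ 2 +
          dHyp q ((Real.sqrt 2, ![1, 0]) : ℝ × (Fin 2 → ℝ)) ^ 2 <
        2 * dHyp ((Real.sqrt (5 + 4 * Real.sqrt 2))⁻¹ •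
              ((2 + Real.sqrt 2, ![1, 0]) : ℝ × (Fin 2 → ℝ)))
            ((1, ![0, 0]) : ℝ × (Fin 2 → ℝ)) ^ 2 +
          dHyp ((Real.sqrt (5 + 4 * Real.sqrt 2))⁻¹ •
              ((2 + Real.sqrt 2, ![1, 0]) : ℝ × (Fin 2 → ℝ)))
            ((Real.sqrt 2, ![1, 0]) : ℝ × (Fin 2 → ℝ)) ^ 2 := by
  set S := √(5 + 4 * √2)
  have hS : S ^ 2 = 5 + 4 * √2 := sq_sqrt (by positivity)
  have hS0 : S ≠ 0 := by positivity
  have hsq2 : √2 ^ 2 = 2 := sq_sqrt zero_le_two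
  have ha : ((1, ![0, 0]) : ℝ × (Fin 2 → ℝ)) = hypLine 0 := by simp [hypLine]
  have hb : ((√2, ![1, 0]) : ℝ × (Fin 2 → ℝ)) = hypLine (arsinh 1) :=
    (hypLine_arsinh (by linarith) (by positivity)).symm
  have hp : S⁻¹ • ((2 + √2, ![1, 0]) : ℝ × (Fin 2 → ℝ)) = hypLine (arsinh S⁻¹) := by
    rw [hypLine_arsinh (x₀ := S⁻¹ * (2 + √2)) _ (by positivity)]
    · simp [Matrix.smul_cons]
    · field_simp
      linear_combination hsq2 - hS
  refine ⟨hypLine (arsinh 1 / 3), hypLine_mem_hyp _, ?_⟩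
  rw [ha, hb, hp]
  simp only [dHyp_hypLine, sq_abs, sub_zero]
  exact two_mul_sq_add_sq_sub_lt_of_ne_div_three (fun h => arsinh_one_ne_three_mul_arsinh (by linarith))
end
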